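/- For k = 1, …, n let P_k be a Lebesgue measurable subset of □, and let f_1, f_2 : Ω × □^n × ℝ^m → [0,∞) be functions such that for j = 1, 2: f_j(x, ·, ·) is continuous on □^n × ℝ^m for every x ∈ Ω, and f_j(·, y, z) is Lebesgue measurable on Ω for every (y, z). Define f(x, y¹, …, yⁿ, z) := (∏_{k=1}^n χ_{P_k}(y^k)) f_1(x, y¹, …, yⁿ, z) + (1 − ∏_{k=1}^n χ_{P_k}(y^k)) f_2(x, y¹, …, yⁿ, z). Then f is an admissible integrand. -/

import Mathlib

open MeasureTheory Filter Topology

/-- The unit cell `□ = [0,1)^d` in `ℝ^d`. -/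
def unitCell (d : ℕ) : Set (Fin d → ℝ) := Set.univ.pi fun _ => Set.Ico (0 : ℝ) 1

/-- The `n`-fold product `□^n` of unit cells. -/
def unitCellPow (d n : ℕ) : Set (Fin n → Fin d → ℝ) := Set.univ.pi fun _ => unitCell d

/-- A function `f : Ω × □^n × ℝ^m → [0,∞)` is an *admissible integrand* if for every
`δ > 0` there are compact sets `X ⊆ Ω` and `Y ⊆ □` whose complements have measure at
most `δ` such that the restriction of `f` to `X × Y^n × ℝ^m` is continuous. -/
def AdmissibleIntegrand {d n m : ℕ} (Ω : Set (Fin d → ℝ))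
    (f : (Fin d → ℝ) → (Fin n → Fin d → ℝ) → (Fin m → ℝ) → ℝ) : Prop :=
  ∀ δ > (0 : ℝ), ∃ X : Set (Fin d → ℝ),
    IsCompact X ∧ X ⊆ Ω ∧ volume (Ω \ X) ≤ ENNReal.ofReal δ ∧
    ∃ Y : Set (Fin d → ℝ),
      IsCompact Y ∧ Y ⊆ unitCell d ∧ volume (unitCell d \ Y) ≤ ENNReal.ofReal δ ∧
      ContinuousOn
        (fun p : (Fin d → ℝ) × (Fin n → Fin d → ℝ) × (Fin m → ℝ) => f p.1 p.2.1 p.2.2)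
        (X ×ˢ (Set.univ.pi fun _ => Y) ×ˢ Set.univ)

/-!
Lusin's theorem, applied to the vector of indicators `(χ_{P_k})_k`, gives a compact `Y ⊆ □`
of almost full measure on which every `χ_{P_k}` is continuous, so the mixing coefficient is
continuous on `Y^n`. The Scorza-Dragoni theorem gives, for `j = 1, 2`, a compact `X ⊆ Ω` of
almost full measure with `f_j` jointly continuous on `X × Y^n × ℝ^m`. It is again Lusin's
theorem, now for `x ↦ f_j(x, ·)` with values in the Polish space `C(Y^n × ℝ^m, ℝ)`; this map is
measurable because evaluation at a countable dense set is a continuous injection, hence a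
measurable embedding (Lusin-Souslin).

Lusin's theorem itself is proved by approximating, for each `U` of a countable basis, both
`F⁻¹ U` and its complement from inside by compact sets: on the intersection `X` of these,
`X \ F⁻¹ U` is closed.
-/

open Set TopologicalSpace
open scoped ENNReal

theorem ContinuousMap.aemeasurable_of_aemeasurable_apply {α Z : Type*} [MeasurableSpace α]
    {μ : Measure α} [TopologicalSpace Z] [LocallyCompactSpace Z] [SecondCountableTopology Z]
    [MeasurableSpace C(Z, ℝ)] [BorelSpace C(Z, ℝ)] {F : α → C(Z, ℝ)}
    (hF : ∀ z, AEMeasurable (fun x => F x z) μ) : AEMeasurable F μ := by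
  obtain ⟨D, hDc, hD⟩ := exists_countable_dense Z
  have : Countable D := hDc.to_subtype
  have hΦ : MeasurableEmbedding fun (g : C(Z, ℝ)) (z : D) => g z :=
    Continuous.measurableEmbedding (continuous_pi fun z => continuous_eval_const (z : Z))
      fun g h hgh => ContinuousMap.ext <| congrFun <|
        Continuous.ext_on hD g.continuous h.continuous fun z hz => congrFun hgh ⟨z, hz⟩
  exact hΦ.aemeasurable_comp_iff.1 (aemeasurable_pi_lambda _ fun z => hF z)

section InnerRegular

variable {α : Type*} [MeasurableSpace α] [TopologicalSpace α] [T2Space α]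
  [OpensMeasurableSpace α] {μ : Measure α} [μ.InnerRegularCompactLTTop]
  {A : Set α} {ε : ℝ≥0∞}

theorem exists_isCompact_isClosed_diff_of_measurableSet (hA : MeasurableSet A) (hμA : μ A ≠ ∞)
    {S : Set α} (hS : MeasurableSet S) (hε : ε ≠ 0) :
    ∃ K ⊆ A, IsCompact K ∧ μ (A \ K) ≤ ε ∧ IsClosed (K \ S) := by
  have hε2 : ε / 2 ≠ 0 := (ENNReal.half_pos hε).ne'
  obtain ⟨C, hCA, hC, hμC⟩ := (hA.inter hS).exists_isCompact_sdiff_lt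
    (measure_ne_top_of_subset inter_subset_left hμA) hε2
  obtain ⟨D, hDA, hD, hμD⟩ := (hA.diff hS).exists_isCompact_sdiff_lt
    (measure_ne_top_of_subset sdiff_subset hμA) hε2
  have hKS : (C ∪ D) \ S = D := by
    rw [union_sdiff_distrib, sdiff_eq_empty.2 (hCA.trans inter_subset_right), empty_union,
      sdiff_eq_left.2 (disjoint_of_subset_left hDA disjoint_sdiff_left)]
  refine ⟨C ∪ D, union_subset (hCA.trans inter_subset_left) (hDA.trans sdiff_subset),
    hC.union hD, ?_, by rw [hKS]; exact hD.isClosed⟩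
  have hcover : A \ (C ∪ D) ⊆ (A ∩ S) \ C ∪ (A \ S) \ D := by
    intro x ⟨hxA, hxCD⟩
    by_cases hxS : x ∈ S
    · exact Or.inl ⟨⟨hxA, hxS⟩, fun h => hxCD (Or.inl h)⟩
    · exact Or.inr ⟨⟨hxA, hxS⟩, fun h => hxCD (Or.inr h)⟩
  calc μ (A \ (C ∪ D)) ≤ μ ((A ∩ S) \ C) + μ ((A \ S) \ D) :=
        (measure_mono hcover).trans (measure_union_le _ _)
    _ ≤ ε / 2 + ε / 2 := add_le_add hμC.le hμD.le
    _ = ε := ENNReal.add_halves ε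

theorem exists_isCompact_isClosed_diff_of_countable (hA : MeasurableSet A) (hμA : μ A ≠ ∞)
    {ι : Type*} [Countable ι] {S : ι → Set α} (hS : ∀ i, MeasurableSet (S i)) (hε : ε ≠ 0) :
    ∃ X ⊆ A, IsCompact X ∧ μ (A \ X) ≤ ε ∧ ∀ i, IsClosed (X \ S i) := by
  have hε2 : ε / 2 ≠ 0 := (ENNReal.half_pos hε).ne'
  obtain ⟨η, hη, hηε⟩ := ENNReal.exists_pos_sum_of_countable hε2 ι
  obtain ⟨K₀, hK₀A, hK₀, hμK₀⟩ := hA.exists_isCompact_sdiff_lt hμA hε2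
  choose K hKA hK hμK hKS using fun i =>
    exists_isCompact_isClosed_diff_of_measurableSet hA hμA (hS i)
      (ENNReal.coe_ne_zero.2 (hη i).ne')
  refine ⟨K₀ ∩ ⋂ i, K i, inter_subset_left.trans hK₀A,
    hK₀.inter_right (isClosed_iInter fun i => (hK i).isClosed), ?_, fun i => ?_⟩
  · calc μ (A \ (K₀ ∩ ⋂ i, K i)) = μ (A \ K₀ ∪ ⋃ i, A \ K i) := by
          rw [sdiff_inter, sdiff_iInter]
      _ ≤ μ (A \ K₀) + ∑' i, μ (A \ K i) :=
          (measure_union_le _ _).trans (add_le_add le_rfl (measure_iUnion_le _))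
      _ ≤ ε / 2 + ε / 2 := add_le_add hμK₀.le ((ENNReal.tsum_le_tsum hμK).trans hηε.le)
      _ = ε := ENNReal.add_halves ε
  · have hX : (K₀ ∩ ⋂ j, K j) \ S i = (K₀ ∩ ⋂ j, K j) ∩ (K i \ S i) := by
      ext x
      simp only [Set.mem_sdiff, mem_inter_iff, mem_iInter]
      tauto
    rw [hX]
    exact (hK₀.isClosed.inter (isClosed_iInter fun j => (hK j).isClosed)).inter (hKS i)

variable {E : Type*} [TopologicalSpace E] [SecondCountableTopology E] [MeasurableSpace E]
  [OpensMeasurableSpace E] {F : α → E}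

/-- Lusin's theorem. -/
theorem Measurable.exists_isCompact_continuousOn (hF : Measurable F) (hA : MeasurableSet A)
    (hμA : μ A ≠ ∞) (hε : ε ≠ 0) :
    ∃ X ⊆ A, IsCompact X ∧ μ (A \ X) ≤ ε ∧ ContinuousOn F X := by
  obtain ⟨X, hXA, hX, hμX, hXU⟩ := exists_isCompact_isClosed_diff_of_countable hA hμA
    (S := fun U : countableBasis E => F ⁻¹' U)
    (fun U => hF (isOpen_of_mem_countableBasis U.2).measurableSet) hε
  refine ⟨X, hXA, hX, hμX, (isBasis_countableBasis E).continuousOn_iff.2 fun U hU => ?_⟩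
  refine ⟨(X \ F ⁻¹' U)ᶜ, (hXU ⟨U, hU⟩).isOpen_compl, ?_⟩
  ext x
  simp only [mem_inter_iff, mem_compl_iff, Set.mem_sdiff, mem_preimage]
  tauto

theorem AEMeasurable.exists_isCompact_continuousOn (hF : AEMeasurable F (μ.restrict A))
    (hA : MeasurableSet A) (hμA : μ A ≠ ∞) (hε : ε ≠ 0) :
    ∃ X ⊆ A, IsCompact X ∧ μ (A \ X) ≤ ε ∧ ContinuousOn F X := by
  obtain ⟨N, hN, hNm, hμN⟩ := exists_measurable_superset_of_null (ae_iff.1 hF.ae_eq_mk)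
  rw [Measure.restrict_apply hNm] at hμN
  obtain ⟨X, hXA, hX, hμX, hFX⟩ := hF.measurable_mk.exists_isCompact_continuousOn
    (hA.diff hNm) (measure_ne_top_of_subset sdiff_subset hμA) hε
  refine ⟨X, hXA.trans sdiff_subset, hX, ?_, hFX.congr fun x hx => ?_⟩
  · have hAN : (A \ N) \ X = (A \ X) \ (N ∩ A) := by
      ext x
      simp only [Set.mem_sdiff, mem_inter_iff]
      tauto
    rwa [hAN, measure_sdiff_null hμN] at hμX
  · by_contra h
    exact (hXA hx).2 (hN h)

/-- Scorza-Dragoni theorem. -/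
theorem exists_isCompact_continuousOn_uncurry (hA : MeasurableSet A) (hμA : μ A ≠ ∞)
    {W : Type*} [TopologicalSpace W] [LocallyCompactSpace W] [SecondCountableTopology W]
    {S : Set W} (hS : IsClosed S) {f : α → W → ℝ}
    (hfc : ∀ x ∈ A, ContinuousOn (f x) S)
    (hfm : ∀ w ∈ S, AEMeasurable (fun x => f x w) (μ.restrict A)) (hε : ε ≠ 0) :
    ∃ X ⊆ A, IsCompact X ∧ μ (A \ X) ≤ ε ∧ ContinuousOn (Function.uncurry f) (X ×ˢ S) := by
  classical
  have : LocallyCompactSpace S := hS.isClosedEmbedding_subtypeVal.locallyCompactSpace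
  borelize C(S, ℝ)
  -- outside `A` the section `f x` need not be continuous, so it is replaced by `0` there
  let F : α → C(S, ℝ) := fun x =>
    if hx : x ∈ A then ⟨S.domRestrict (f x), (hfc x hx).domRestrict⟩ else 0
  have hFA : ∀ x ∈ A, ∀ w : S, F x w = f x w := fun x hx w => by simp only [F, dif_pos hx]; rfl
  have hF : AEMeasurable F (μ.restrict A) :=
    ContinuousMap.aemeasurable_of_aemeasurable_apply fun w => (hfm w w.2).congr <|
      (ae_restrict_mem hA).mono fun x hx => (hFA x hx w).symm
  obtain ⟨X, hXA, hX, hμX, hFX⟩ := hF.exists_isCompact_continuousOn hA hμA hε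
  refine ⟨X, hXA, hX, hμX, continuousOn_iff_continuous_domRestrict.2 ?_⟩
  have hFq : Continuous fun q : ↥(X ×ˢ S) =>
      X.domRestrict F ⟨q.1.1, q.2.1⟩ (⟨q.1.2, q.2.2⟩ : S) :=
    continuous_eval.comp <| (hFX.domRestrict.comp (by fun_prop)).prodMk (by fun_prop)
  exact hFq.congr fun q => hFA _ (hXA q.2.1) _

end InnerRegular

theorem measurableSet_unitCell (d : ℕ) : MeasurableSet (unitCell d) :=
  MeasurableSet.univ_pi fun _ => measurableSet_Ico

theorem volume_unitCell_ne_top (d : ℕ) : volume (unitCell d) ≠ ∞ :=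
  measure_ne_top_of_subset (pi_mono fun _ _ => Ico_subset_Icc_self)
    (isCompact_univ_pi fun _ => isCompact_Icc).measure_ne_top

theorem exists_isCompact_continuousOn_unitCellPow {d n m : ℕ} {Ω : Set (Fin d → ℝ)}
    (hΩo : IsOpen Ω) (hΩb : Bornology.IsBounded Ω) {Y : Set (Fin d → ℝ)} (hY : IsCompact Y)
    (hYcell : Y ⊆ unitCell d) {f : (Fin d → ℝ) → (Fin n → Fin d → ℝ) → (Fin m → ℝ) → ℝ}
    (hfc : ∀ x ∈ Ω, ContinuousOn (fun p : (Fin n → Fin d → ℝ) × (Fin m → ℝ) => f x p.1 p.2)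
      (unitCellPow d n ×ˢ univ))
    (hfm : ∀ y ∈ unitCellPow d n, ∀ z : Fin m → ℝ,
      AEMeasurable (fun x => f x y z) (volume.restrict Ω)) {ε : ℝ≥0∞} (hε : ε ≠ 0) :
    ∃ X ⊆ Ω, IsCompact X ∧ volume (Ω \ X) ≤ ε ∧
      ContinuousOn (fun q : (Fin d → ℝ) × (Fin n → Fin d → ℝ) × (Fin m → ℝ) =>
        f q.1 q.2.1 q.2.2) (X ×ˢ (univ.pi fun _ => Y) ×ˢ univ) := by
  have hS : IsClosed ((univ.pi fun _ : Fin n => Y) ×ˢ (univ : Set (Fin m → ℝ))) :=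
    (isClosed_set_pi fun _ _ => hY.isClosed).prod isClosed_univ
  have hScell : (univ.pi fun _ => Y) ×ˢ univ ⊆ unitCellPow d n ×ˢ (univ : Set (Fin m → ℝ)) :=
    prod_mono (pi_mono fun _ _ => hYcell) subset_rfl
  exact exists_isCompact_continuousOn_uncurry (f := fun x p => f x p.1 p.2) hΩo.measurableSet
    hΩb.measure_lt_top.ne hS (fun x hx => (hfc x hx).mono hScell)
    (fun p hp => hfm p.1 (hScell hp).1 p.2) hε

theorem statement9_general
    (d n m : ℕ)
    (Ω : Set (Fin d → ℝ)) (hΩo : IsOpen Ω) (hΩb : Bornology.IsBounded Ω)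
    (P : Fin n → Set (Fin d → ℝ)) (hPm : ∀ k, MeasurableSet (P k))
    (f₁ f₂ : (Fin d → ℝ) → (Fin n → Fin d → ℝ) → (Fin m → ℝ) → ℝ)
    (hf₁c : ∀ x ∈ Ω,
      ContinuousOn (fun p : (Fin n → Fin d → ℝ) × (Fin m → ℝ) => f₁ x p.1 p.2)
        (unitCellPow d n ×ˢ Set.univ))
    (hf₂c : ∀ x ∈ Ω,
      ContinuousOn (fun p : (Fin n → Fin d → ℝ) × (Fin m → ℝ) => f₂ x p.1 p.2)
        (unitCellPow d n ×ˢ Set.univ))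
    (hf₁m : ∀ y ∈ unitCellPow d n, ∀ z : Fin m → ℝ,
      AEMeasurable (fun x => f₁ x y z) (volume.restrict Ω))
    (hf₂m : ∀ y ∈ unitCellPow d n, ∀ z : Fin m → ℝ,
      AEMeasurable (fun x => f₂ x y z) (volume.restrict Ω)) :
    AdmissibleIntegrand Ω
      (fun x y z =>
        (∏ k, (P k).indicator (fun _ => (1 : ℝ)) (y k)) * f₁ x y z +
          (1 - ∏ k, (P k).indicator (fun _ => (1 : ℝ)) (y k)) * f₂ x y z) := by
  intro δ hδ
  have hδ0 : ENNReal.ofReal δ ≠ 0 := (ENNReal.ofReal_pos.2 hδ).ne'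
  have hδ2 : ENNReal.ofReal δ / 2 ≠ 0 := (ENNReal.half_pos hδ0).ne'
  have hχm : Measurable fun (y : Fin d → ℝ) k => (P k).indicator (fun _ => (1 : ℝ)) y :=
    measurable_pi_lambda _ fun k => measurable_const.indicator (hPm k)
  obtain ⟨Y, hYcell, hY, hμY, hχY⟩ :=
    hχm.exists_isCompact_continuousOn (measurableSet_unitCell d) (volume_unitCell_ne_top d) hδ0
  obtain ⟨X₁, hX₁Ω, hX₁, hμX₁, hf₁X₁⟩ :=
    exists_isCompact_continuousOn_unitCellPow hΩo hΩb hY hYcell hf₁c hf₁m hδ2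
  obtain ⟨X₂, -, hX₂, hμX₂, hf₂X₂⟩ :=
    exists_isCompact_continuousOn_unitCellPow hΩo hΩb hY hYcell hf₂c hf₂m hδ2
  refine ⟨X₁ ∩ X₂, hX₁.inter_right hX₂.isClosed, inter_subset_left.trans hX₁Ω, ?_,
    Y, hY, hYcell, hμY, ?_⟩
  · calc volume (Ω \ (X₁ ∩ X₂)) ≤ volume (Ω \ X₁) + volume (Ω \ X₂) := by
          rw [sdiff_inter]; exact measure_union_le _ _
      _ ≤ ENNReal.ofReal δ / 2 + ENNReal.ofReal δ / 2 := add_le_add hμX₁ hμX₂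
      _ = ENNReal.ofReal δ := ENNReal.add_halves _
  · have hχ : ContinuousOn (fun q : (Fin d → ℝ) × (Fin n → Fin d → ℝ) × (Fin m → ℝ) =>
        ∏ k, (P k).indicator (fun _ => (1 : ℝ)) (q.2.1 k))
        ((X₁ ∩ X₂) ×ˢ (univ.pi fun _ => Y) ×ˢ univ) :=
      continuousOn_finsetProd _ fun k _ => ((continuous_apply k).comp_continuousOn hχY).comp
        (by fun_prop) fun q hq => hq.2.1 k (mem_univ k)
    exact (hχ.mul (hf₁X₁.mono (prod_mono inter_subset_left subset_rfl))).add
      ((continuousOn_const.sub hχ).mul (hf₂X₂.mono (prod_mono inter_subset_right subset_rfl)))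

/-- The multiscale mixture
`f = (∏_k χ_{P_k}(y^k)) f₁ + (1 − ∏_k χ_{P_k}(y^k)) f₂` of two Carathéodory
integrands is an admissible integrand. -/
theorem statement9
    (d n m : ℕ) (hd : 0 < d) (hn : 0 < n) (hm : 0 < m)
    (Ω : Set (Fin d → ℝ)) (hΩo : IsOpen Ω) (hΩb : Bornology.IsBounded Ω)
    (P : Fin n → Set (Fin d → ℝ)) (hPm : ∀ k, MeasurableSet (P k))
    (hPc : ∀ k, P k ⊆ unitCell d)
    (f₁ f₂ : (Fin d → ℝ) → (Fin n → Fin d → ℝ) → (Fin m → ℝ) → ℝ)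
    (hf₁0 : ∀ x ∈ Ω, ∀ y ∈ unitCellPow d n, ∀ z, 0 ≤ f₁ x y z)
    (hf₂0 : ∀ x ∈ Ω, ∀ y ∈ unitCellPow d n, ∀ z, 0 ≤ f₂ x y z)
    (hf₁c : ∀ x ∈ Ω,
      ContinuousOn (fun p : (Fin n → Fin d → ℝ) × (Fin m → ℝ) => f₁ x p.1 p.2)
        (unitCellPow d n ×ˢ Set.univ))
    (hf₂c : ∀ x ∈ Ω,
      ContinuousOn (fun p : (Fin n → Fin d → ℝ) × (Fin m → ℝ) => f₂ x p.1 p.2)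
        (unitCellPow d n ×ˢ Set.univ))
    (hf₁m : ∀ y ∈ unitCellPow d n, ∀ z : Fin m → ℝ,
      AEMeasurable (fun x => f₁ x y z) (volume.restrict Ω))
    (hf₂m : ∀ y ∈ unitCellPow d n, ∀ z : Fin m → ℝ,
      AEMeasurable (fun x => f₂ x y z) (volume.restrict Ω)) :
    AdmissibleIntegrand Ω
      (fun x y z =>
        (∏ k, (P k).indicator (fun _ => (1 : ℝ)) (y k)) * f₁ x y z +
          (1 - ∏ k, (P k).indicator (fun _ => (1 : ℝ)) (y k)) * f₂ x y z) :=
  statement9_general d n m Ω hΩo hΩb P hPm f₁ f₂ hf₁c hf₂c hf₁m hf₂m
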